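/- arXiv:2304.02023 — 2 statements merged into one kernel-verified Lean document; each statement's English description precedes it below -/
import Mathlib

section
/- Let Z = f(X, N) with X ⫫ N, and let Y = g(N) be a function of N. Then I(X;Z | Y) ≤ I(X;Z | N). -/
open Finset

/-- Probability of the event `U = u` under the pmf `p` on a finite sample space. -/
noncomputable def pr {Ω : Type*} [Fintype Ω] (p : Ω → ℝ) {α : Type*} [DecidableEq α]
    (U : Ω → α) (u : α) : ℝ :=
  ∑ ω ∈ univ.filter (fun ω => U ω = u), p ω

/-- Shannon entropy of a discrete random variable `U` under pmf `p`. -/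
noncomputable def ent {Ω : Type*} [Fintype Ω] (p : Ω → ℝ) {α : Type*} [Fintype α]
    [DecidableEq α] (U : Ω → α) : ℝ :=
  ∑ u, Real.negMulLog (pr p U u)

/-- Conditional entropy `H(U | V)`. -/
noncomputable def condEnt {Ω : Type*} [Fintype Ω] (p : Ω → ℝ) {α β : Type*}
    [Fintype α] [DecidableEq α] [Fintype β] [DecidableEq β]
    (U : Ω → α) (V : Ω → β) : ℝ :=
  ent p (fun ω => (U ω, V ω)) - ent p V

/-- Mutual information `I(U;W)`. -/
noncomputable def mi {Ω : Type*} [Fintype Ω] (p : Ω → ℝ) {α β : Type*}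
    [Fintype α] [DecidableEq α] [Fintype β] [DecidableEq β]
    (U : Ω → α) (W : Ω → β) : ℝ :=
  ent p U + ent p W - ent p (fun ω => (U ω, W ω))

/-- Conditional mutual information `I(U;W | V)`. -/
noncomputable def cmi {Ω : Type*} [Fintype Ω] (p : Ω → ℝ) {α β γ : Type*}
    [Fintype α] [DecidableEq α] [Fintype β] [DecidableEq β] [Fintype γ] [DecidableEq γ]
    (U : Ω → α) (W : Ω → β) (V : Ω → γ) : ℝ :=
  ent p (fun ω => (U ω, V ω)) + ent p (fun ω => (W ω, V ω))
    - ent p (fun ω => (U ω, W ω, V ω)) - ent p V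

/-- `p` is a probability mass function. -/
def IsPMF {Ω : Type*} [Fintype Ω] (p : Ω → ℝ) : Prop :=
  (∀ ω, 0 ≤ p ω) ∧ ∑ ω, p ω = 1

/-- `U` and `V` are independent under `p`. -/
def Indep {Ω : Type*} [Fintype Ω] (p : Ω → ℝ) {α β : Type*} [DecidableEq α] [DecidableEq β]
    (U : Ω → α) (V : Ω → β) : Prop :=
  ∀ u v, pr p (fun ω => (U ω, V ω)) (u, v) = pr p U u * pr p V v


/-!
By the chain rule, `I(X;Z|Y) + I(X;N|Z,Y) = I(X;N|Y) + I(X;Z|N,Y)`. Since `Y` is a function of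
`N`, the last term is `I(X;Z|N)`; since moreover `X ⫫ N`, the term `I(X;N|Y)` equals `-I(X;Y)`.
The theorem then follows from the nonnegativity of `I(X;N|Z,Y)` and of `I(X;Y)`, both instances
of Gibbs' inequality.
-/

section InformationInequalities

variable {Ω : Type*} [Fintype Ω] {p : Ω → ℝ} {α β γ : Type*}

lemma pr_nonneg (hp : ∀ ω, 0 ≤ p ω) [DecidableEq α] (U : Ω → α) (u : α) : 0 ≤ pr p U u :=
  sum_nonneg fun ω _ => hp ω

lemma pr_apply_pos (hp : ∀ ω, 0 ≤ p ω) {ω : Ω} (hω : p ω ≠ 0) [DecidableEq α] (U : Ω → α) :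
    0 < pr p U (U ω) :=
  (lt_of_le_of_ne (hp ω) hω.symm).trans_le (single_le_sum (fun ω _ => hp ω) (by simp))

lemma sum_pr [Fintype α] [DecidableEq α] (U : Ω → α) : ∑ u, pr p U u = ∑ ω, p ω :=
  sum_fiberwise univ U p

lemma sum_pr_pair_fst [Fintype α] [DecidableEq α] [DecidableEq β] (U : Ω → α) (V : Ω → β)
    (v : β) : ∑ u, pr p (fun ω => (U ω, V ω)) (u, v) = pr p V v := by
  rw [pr, ← sum_fiberwise_of_maps_to (g := U) (t := univ) (fun ω _ => mem_univ _) p]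
  refine sum_congr rfl fun u _ => ?_
  rw [pr, filter_filter]
  simp only [Prod.ext_iff, and_comm]

lemma sum_mul_comp_eq_sum_pr_mul [Fintype α] [DecidableEq α] (T : Ω → α) (F : α → ℝ) :
    ∑ ω, p ω * F (T ω) = ∑ a, pr p T a * F a := by
  rw [← sum_fiberwise univ T]
  refine sum_congr rfl fun a _ => ?_
  rw [pr, sum_mul]
  exact sum_congr rfl fun ω hω => by rw [(mem_filter.1 hω).2]

lemma pr_comp_injective [DecidableEq α] [DecidableEq β] {σ : α → β} (hσ : σ.Injective)
    (U : Ω → α) (u : α) : pr p (fun ω => σ (U ω)) (σ u) = pr p U u := by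
  simp only [pr, hσ.eq_iff]

lemma ent_eq_neg_sum_mul_log [Fintype α] [DecidableEq α] (U : Ω → α) :
    ent p U = -∑ ω, p ω * Real.log (pr p U (U ω)) := by
  rw [sum_mul_comp_eq_sum_pr_mul U fun a => Real.log (pr p U a), ent, ← sum_neg_distrib]
  simp only [Real.negMulLog, neg_mul]

lemma ent_eq_of_injective [Fintype α] [DecidableEq α] [Fintype β] [DecidableEq β]
    {σ : α → β} (hσ : σ.Injective) {U : Ω → α} {V : Ω → β} (h : ∀ ω, V ω = σ (U ω)) :
    ent p V = ent p U := by
  obtain rfl : V = fun ω => σ (U ω) := funext h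
  simp only [ent_eq_neg_sum_mul_log, pr_comp_injective hσ]

lemma ent_const (hp : ∑ ω, p ω = 1) [Fintype α] [DecidableEq α] (a : α) :
    ent p (fun _ => a) = 0 := by
  rw [ent_eq_neg_sum_mul_log, pr, filter_true_of_mem fun _ _ => rfl, hp]
  simp

lemma ent_pair_of_indep (hp : ∑ ω, p ω = 1) [Fintype α] [DecidableEq α] [Fintype β]
    [DecidableEq β] {U : Ω → α} {V : Ω → β} (h : Indep p U V) :
    ent p (fun ω => (U ω, V ω)) = ent p U + ent p V := by
  have hnml : ∀ u v, Real.negMulLog (pr p (fun ω => (U ω, V ω)) (u, v))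
      = pr p V v * Real.negMulLog (pr p U u) + pr p U u * Real.negMulLog (pr p V v) :=
    fun u v => by rw [h u v, Real.negMulLog_mul]
  simp only [ent, Fintype.sum_prod_type, hnml, sum_add_distrib, ← mul_sum, ← sum_mul, sum_pr, hp,
    one_mul]

lemma sum_mul_log_le (hp : ∀ ω, 0 ≤ p ω) {F : Ω → ℝ} (hF : ∀ ω, p ω ≠ 0 → 0 < F ω) :
    ∑ ω, p ω * Real.log (F ω) ≤ ∑ ω, p ω * F ω - ∑ ω, p ω := by
  rw [← sum_sub_distrib]
  refine sum_le_sum fun ω _ => ?_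
  rcases eq_or_ne (p ω) 0 with h | h
  · simp [h]
  · rw [← mul_sub_one]
    exact mul_le_mul_of_nonneg_left (Real.log_le_sub_one_of_pos (hF ω h)) (hp ω)

lemma sum_mul_div_pr_le [Fintype α] [DecidableEq α] (T : Ω → α)
    {G : α → ℝ} (hG : ∀ a, 0 ≤ G a) :
    ∑ ω, p ω * (G (T ω) / pr p T (T ω)) ≤ ∑ a, G a := by
  rw [sum_mul_comp_eq_sum_pr_mul T fun a => G a / pr p T a]
  refine sum_le_sum fun a _ => ?_
  rcases eq_or_ne (pr p T a) 0 with h | h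
  · simp [h, hG a]
  · rw [mul_div_cancel₀ _ h]

lemma sum_pr_mul_pr_div_pr_le (hp : ∀ ω, 0 ≤ p ω) [Fintype α] [DecidableEq α] [Fintype β]
    [DecidableEq β] [Fintype γ] [DecidableEq γ] (U : Ω → α) (W : Ω → β) (V : Ω → γ) :
    ∑ t : α × β × γ, pr p (fun ω => (U ω, V ω)) (t.1, t.2.2) * pr p (fun ω => (W ω, V ω)) t.2
      / pr p V t.2.2 ≤ ∑ ω, p ω := by
  have hsum_W : ∀ u v, ∑ w, pr p (fun ω => (U ω, V ω)) (u, v) * pr p (fun ω => (W ω, V ω)) (w, v)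
      / pr p V v ≤ pr p (fun ω => (U ω, V ω)) (u, v) := fun u v => by
    rw [← sum_div, ← mul_sum, sum_pr_pair_fst, mul_div_assoc]
    exact mul_le_of_le_one_right (pr_nonneg hp _ _) (div_self_le_one _)
  calc _ = ∑ u, ∑ v, ∑ w, pr p (fun ω => (U ω, V ω)) (u, v)
          * pr p (fun ω => (W ω, V ω)) (w, v) / pr p V v := by
        simp only [Fintype.sum_prod_type]
        exact sum_congr rfl fun u _ => sum_comm
    _ ≤ ∑ u, ∑ v, pr p (fun ω => (U ω, V ω)) (u, v) :=
        sum_le_sum fun u _ => sum_le_sum fun v _ => hsum_W u v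
    _ = ∑ ω, p ω := by rw [← Fintype.sum_prod_type', sum_pr]

theorem cmi_nonneg (hp : ∀ ω, 0 ≤ p ω) [Fintype α] [DecidableEq α] [Fintype β]
    [DecidableEq β] [Fintype γ] [DecidableEq γ] (U : Ω → α) (W : Ω → β) (V : Ω → γ) :
    0 ≤ cmi p U W V := by
  let T : Ω → α × β × γ := fun ω => (U ω, W ω, V ω)
  -- Gibbs' inequality compares the law of `T` with `q(u,v) q(w,v) / q(v)`, of mass at most `∑ p`.
  let G : α × β × γ → ℝ := fun t =>
    pr p (fun ω => (U ω, V ω)) (t.1, t.2.2) * pr p (fun ω => (W ω, V ω)) t.2 / pr p V t.2.2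
  have hG : ∀ t, 0 ≤ G t := fun t =>
    div_nonneg (mul_nonneg (pr_nonneg hp _ _) (pr_nonneg hp _ _)) (pr_nonneg hp _ _)
  let F : Ω → ℝ := fun ω => G (T ω) / pr p T (T ω)
  have hq : ∀ ω, p ω ≠ 0 → 0 < pr p (fun ω => (U ω, V ω)) (U ω, V ω) ∧
      0 < pr p (fun ω => (W ω, V ω)) (W ω, V ω) ∧ 0 < pr p V (V ω) ∧ 0 < pr p T (T ω) :=
    fun ω hω => ⟨pr_apply_pos hp hω _, pr_apply_pos hp hω _, pr_apply_pos hp hω _,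
      pr_apply_pos hp hω _⟩
  have hF : ∀ ω, p ω ≠ 0 → 0 < F ω := fun ω hω => by
    obtain ⟨hUV, hWV, hV, hT⟩ := hq ω hω
    exact div_pos (div_pos (mul_pos hUV hWV) hV) hT
  have hlogF : ∀ ω, p ω * Real.log (F ω) = p ω * Real.log (pr p (fun ω => (U ω, V ω)) (U ω, V ω))
      + p ω * Real.log (pr p (fun ω => (W ω, V ω)) (W ω, V ω)) - p ω * Real.log (pr p V (V ω))
      - p ω * Real.log (pr p T (T ω)) := fun ω => by
    rcases eq_or_ne (p ω) 0 with h | h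
    · simp [h]
    · obtain ⟨hUV, hWV, hV, hT⟩ := hq ω h
      rw [Real.log_div (div_pos (mul_pos hUV hWV) hV).ne' hT.ne',
        Real.log_div (mul_pos hUV hWV).ne' hV.ne', Real.log_mul hUV.ne' hWV.ne']
      ring
  have hcmi : cmi p U W V = -∑ ω, p ω * Real.log (F ω) := by
    simp only [cmi, ent_eq_neg_sum_mul_log, hlogF, sum_add_distrib, sum_sub_distrib]
    ring
  calc 0 ≤ ∑ ω, p ω - ∑ t, G t := sub_nonneg.2 (sum_pr_mul_pr_div_pr_le hp U W V)
    _ ≤ ∑ ω, p ω - ∑ ω, p ω * F ω := sub_le_sub_left (sum_mul_div_pr_le T hG) _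
    _ ≤ -∑ ω, p ω * Real.log (F ω) := by linarith [sum_mul_log_le hp hF]
    _ = cmi p U W V := hcmi.symm

theorem mi_nonneg (hp : IsPMF p) [Fintype α] [DecidableEq α] [Fintype β] [DecidableEq β]
    (U : Ω → α) (W : Ω → β) : 0 ≤ mi p U W := by
  have h := cmi_nonneg hp.1 U W fun _ => ()
  rwa [cmi, ent_const hp.2, sub_zero,
    ent_eq_of_injective (σ := fun u => (u, ())) (Prod.mk_left_injective ()) fun _ => rfl,
    ent_eq_of_injective (σ := fun w => (w, ())) (Prod.mk_left_injective ()) fun _ => rfl,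
    ent_eq_of_injective (σ := fun x : α × β => (x.1, x.2, ())) (U := fun ω => (U ω, W ω))
      (Function.LeftInverse.injective (g := fun t => (t.1, t.2.1)) fun _ => rfl) fun _ => rfl] at h

end InformationInequalities

/-- if `Z = f(X,N)`, `X ⫫ N` and `Y = g(N)`, then `I(X;Z|Y) ≤ I(X;Z|N)`. -/
theorem cmi_mono_of_function_of_noise {Ω : Type*} [Fintype Ω] (p : Ω → ℝ) (hp : IsPMF p)
    {𝒳 𝒩 𝒵 𝒴 : Type*} [Fintype 𝒳] [DecidableEq 𝒳] [Fintype 𝒩] [DecidableEq 𝒩]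
    [Fintype 𝒵] [DecidableEq 𝒵] [Fintype 𝒴] [DecidableEq 𝒴]
    (X : Ω → 𝒳) (N : Ω → 𝒩) (Z : Ω → 𝒵) (Y : Ω → 𝒴)
    (f : 𝒳 → 𝒩 → 𝒵) (g : 𝒩 → 𝒴)
    (hZ : ∀ ω, Z ω = f (X ω) (N ω))
    (hY : ∀ ω, Y ω = g (N ω))
    (hXN : Indep p X N) :
    cmi p X Z Y ≤ cmi p X Z N := by
  have hXZN : ent p (fun ω => (X ω, Z ω, N ω)) = ent p (fun ω => (X ω, N ω)) :=
    ent_eq_of_injective (σ := fun s => (s.1, f s.1 s.2, s.2))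
      (Function.LeftInverse.injective (g := fun t => (t.1, t.2.2)) fun _ => rfl)
      fun ω => by simp only [hZ]
  have hNZY : ent p (fun ω => (N ω, Z ω, Y ω)) = ent p (fun ω => (Z ω, N ω)) :=
    ent_eq_of_injective (σ := fun s => (s.2, s.1, g s.2))
      (Function.LeftInverse.injective (g := fun t => (t.2.1, t.1)) fun _ => rfl)
      fun ω => by simp only [hY]
  have hXNZY : ent p (fun ω => (X ω, N ω, Z ω, Y ω)) = ent p (fun ω => (X ω, N ω)) :=
    ent_eq_of_injective (σ := fun s => (s.1, s.2, f s.1 s.2, g s.2))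
      (Function.LeftInverse.injective (g := fun t => (t.1, t.2.1)) fun _ => rfl)
      fun ω => by simp only [hZ, hY]
  have hXN_split := ent_pair_of_indep hp.2 hXN
  have hXN_given_ZY := cmi_nonneg hp.1 X N fun ω => (Z ω, Y ω)
  have hXY := mi_nonneg hp X Y
  simp only [cmi, mi] at hXN_given_ZY hXY ⊢
  linarith
end

section
/- Let X, Z be binary with Z = N_Z(X), N_Z ⫫ X, N_Z distributed over {constant-0, constant-1, ID, NOT}. The conditional probability that 'Z would differ had X been different', i.e. ∑_{x,z} P(Z_{1−x} = 1−z, Z_x = z, X = x), is proportional to the total weight on ID and NOT, which equals p00 + p01 − 2λ_X. In particular this counterfactual influence is a strictly decreasing affine function of λ_X on [λ_X^min, λ_X^max]. -/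
open Finset

/-- The four binary response functions `{const-0, const-1, ID, NOT}`. -/
def RF : Fin 4 → Bool → Bool := ![fun _ => false, fun _ => true, id, fun b => !b]

/-- Response-function weights `(λ, 1−p00−p01+λ, p00−λ, p01−λ)`. -/
noncomputable def scmWeights (lam p00 p01 : ℝ) : Fin 4 → ℝ :=
  ![lam, 1 - p00 - p01 + lam, p00 - lam, p01 - lam]

/-- Joint pmf of `(X, N_Z)` with `P(X = 0) = q` and `N_Z ⫫ X` distributed by the
response-function weights; `Z = N_Z(X)` is then `RF ω.2 ω.1`. -/
noncomputable def scmPMF (q lam p00 p01 : ℝ) : Bool × Fin 4 → ℝ :=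
  fun ω => (if ω.1 = false then q else 1 - q) * scmWeights lam p00 p01 ω.2

/-! Whether `Z` would have differed had `X` been different does not depend on the value `X` actually
took: it happens exactly when the two potential outcomes `Z_0`, `Z_1` differ, i.e. when the response
function is `ID` or `NOT`. Since `N_Z ⫫ X`, the law of `X` then sums out and leaves the weight
`(p00 - λ) + (p01 - λ)` of these two functions. -/

/-- Each `ω` lies in at most one event of the sum, the one with `(x, z) = (X ω, Z (X ω) ω)`, and
it lies in that one iff its two potential outcomes differ. -/
theorem sum_pr_counterfactual_flip_eq_sum_filter_ne {Ω : Type*} [Fintype Ω] (p : Ω → ℝ)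
    (X : Ω → Bool) (Z : Bool → Ω → Bool) :
    ∑ x : Bool, ∑ z : Bool, pr p (fun ω => (Z (!x) ω, Z x ω, X ω)) (!z, z, x)
      = ∑ ω ∈ univ.filter (fun ω => Z true ω ≠ Z false ω), p ω := by
  simp only [pr, Finset.sum_filter, Fintype.sum_bool, Bool.not_true, Bool.not_false,
    ← Finset.sum_add_distrib]
  refine Finset.sum_congr rfl fun ω _ => ?_
  cases X ω <;> cases Z true ω <;> cases Z false ω <;> simp

theorem sum_filter_snd_mul_eq_sum_filter {α β : Type*} [Fintype α] [Fintype β]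
    (μ : α → ℝ) (w : β → ℝ) (hμ : ∑ a, μ a = 1) (P : β → Prop) [DecidablePred P] :
    ∑ ω ∈ univ.filter (fun ω : α × β => P ω.2), μ ω.1 * w ω.2
      = ∑ b ∈ univ.filter P, w b := by
  simp only [Finset.sum_filter, Fintype.sum_prod_type, ← mul_ite_zero, ← Finset.sum_mul_sum,
    hμ, one_mul]

theorem filter_RF_true_ne_false :
    univ.filter (fun n : Fin 4 => RF n true ≠ RF n false) = {2, 3} := by
  decide

theorem sum_scmPMF_filter_RF_true_ne_false (q lam p00 p01 : ℝ) :
    ∑ ω ∈ univ.filter (fun ω : Bool × Fin 4 => RF ω.2 true ≠ RF ω.2 false),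
        scmPMF q lam p00 p01 ω
      = (p00 - lam) + (p01 - lam) := by
  unfold scmPMF
  rw [sum_filter_snd_mul_eq_sum_filter (fun x => if x = false then q else 1 - q) _ (by simp)
      (fun n => RF n true ≠ RF n false),
    filter_RF_true_ne_false, Finset.sum_pair (by decide)]
  rfl

theorem counterfactual_influence_eq_and_strictly_decreasing_general
    (q lam p00 p01 : ℝ)
    (p : Bool × Fin 4 → ℝ) (hp : p = scmPMF q lam p00 p01) :
    (∑ x : Bool, ∑ z : Bool,
        pr p (fun ω => (RF ω.2 (!x), RF ω.2 x, ω.1)) (!z, z, x))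
      = (p00 - lam) + (p01 - lam) ∧
    (∑ ω ∈ Finset.univ.filter (fun ω : Bool × Fin 4 => RF ω.2 true ≠ RF ω.2 false), p ω)
      = p00 + p01 - 2 * lam ∧
    StrictAntiOn (fun l : ℝ => p00 + p01 - 2 * l)
      (Set.Icc (max 0 (p00 + p01 - 1)) (min p00 p01)) := by
  subst hp
  have hresponsive := sum_scmPMF_filter_RF_true_ne_false q lam p00 p01
  refine ⟨?_, hresponsive.trans (by ring), fun a _ b _ hab => by dsimp only; linarith⟩
  exact (sum_pr_counterfactual_flip_eq_sum_filter_ne _ Prod.fst fun x ω => RF ω.2 x).trans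
    hresponsive

/-- the counterfactual influence
`∑_{x,z} P(Z_{1−x} = 1−z, Z_x = z, X = x)` equals the total weight on `ID` and `NOT`,
namely `(p00 − λ_X) + (p01 − λ_X) = p00 + p01 − 2λ_X`, which is a strictly decreasing
affine function of `λ_X`. -/
theorem counterfactual_influence_eq_and_strictly_decreasing
    (q lam p00 p01 : ℝ) (hq : q ∈ Set.Ioo (0 : ℝ) 1)
    (hp00 : p00 ∈ Set.Icc (0 : ℝ) 1) (hp01 : p01 ∈ Set.Icc (0 : ℝ) 1)
    (hlam : lam ∈ Set.Icc (max 0 (p00 + p01 - 1)) (min p00 p01))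
    (p : Bool × Fin 4 → ℝ) (hp : p = scmPMF q lam p00 p01) :
    (∑ x : Bool, ∑ z : Bool,
        pr p (fun ω => (RF ω.2 (!x), RF ω.2 x, ω.1)) (!z, z, x))
      = (p00 - lam) + (p01 - lam) ∧
    (∑ ω ∈ Finset.univ.filter (fun ω : Bool × Fin 4 => RF ω.2 true ≠ RF ω.2 false), p ω)
      = p00 + p01 - 2 * lam ∧
    StrictAntiOn (fun l : ℝ => p00 + p01 - 2 * l)
      (Set.Icc (max 0 (p00 + p01 - 1)) (min p00 p01)) :=
  counterfactual_influence_eq_and_strictly_decreasing_general q lam p00 p01 p hp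
end
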